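/- Let b_n be defined by b_0 = 0, b_1 = -1, and for n \ge 2, b_n = \sum_{k+l=n+1, k,l \ge 2} k b_k b_l + \sum_{k+l=n} b_k b_l. Then the formal power series G(x) = -\sum_{n\ge 1} b_n x^n is the compositional inverse of the series \sum_{n\ge 1} (n-1)! x^n. -/

import Mathlib

/-!
The recurrence says exactly that `B = ∑ bₙ xⁿ` satisfies `B² + (B + x) B' = 0`, i.e. that `G = -B`
solves `(x - G) G' = G²`, while `H = x + x² H'`. Substituting `G` into the latter, `u = H ∘ G`
satisfies the linear equation `G² u' = (u - G) G'`, which `u = x` solves as well. As `G² = O(x²)`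
and `G'(0) = 1`, this equation determines `u` coefficient by coefficient, so `H ∘ G = x`; and a
one-sided compositional inverse of `H` is two-sided.
-/

open PowerSeries Finset

/-- Composition of formal power series (intended for second argument with zero
constant coefficient). -/
noncomputable def PS.comp {R : Type*} [CommRing R] (f g : PowerSeries R) : PowerSeries R :=
  PowerSeries.mk fun n => ∑ k ∈ Finset.range (n + 1), (coeff k f) * coeff n (g ^ k)

/-- `H(x) = ∑_{n ≥ 1} (n-1)! xⁿ = x + x² + 2x³ + 6x⁴ + ⋯`. -/
noncomputable def HSeries : PowerSeries ℚ :=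
  PowerSeries.mk fun n => if n = 0 then 0 else ((n - 1).factorial : ℚ)

namespace PowerSeries

variable {R : Type*} [CommRing R]

theorem coeff_pow_eq_zero_of_lt {g : R⟦X⟧} (hg : constantCoeff g = 0) {n k : ℕ} (h : n < k) :
    coeff n (g ^ k) = 0 := by
  obtain ⟨g', rfl⟩ := X_dvd_iff.mpr hg
  rw [mul_pow, coeff_X_pow_mul', if_neg h.not_ge]

theorem subst_eq_X_of_subst_eq_X {f g : R⟦X⟧} (hf : constantCoeff f = 0)
    (hg : constantCoeff g = 0) (hf1 : IsUnit (coeff 1 f)) (h : f.subst g = X) : g.subst f = X := by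
  have hf' := HasSubst.of_constantCoeff_zero' hf
  have hg' := HasSubst.of_constantCoeff_zero' hg
  set K : R⟦X⟧ := f.substInvOfIsUnit hf1
  have hK : (subst f K : R⟦X⟧) = X := subst_substInvOfIsUnit_left f hf hf1
  have hKg : K = g :=
    calc K = (subst (subst g f : R⟦X⟧) K : R⟦X⟧) := by rw [h, X_subst]
      _ = (subst g (subst f K : R⟦X⟧) : R⟦X⟧) := (subst_comp_subst_apply hf' hg' _).symm
      _ = g := by rw [hK, subst_X hg']
  rw [← hKg, hK]

theorem eq_zero_of_mul_derivative_eq_mul {w P Q : R⟦X⟧} (hQ : X ^ 2 ∣ Q)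
    (hP : IsUnit (constantCoeff P)) (h : Q * d⁄dX R w = w * P) : w = 0 := by
  obtain ⟨Q, rfl⟩ := hQ
  suffices ∀ n, coeff n w = 0 from ext fun n => by simpa using this n
  intro n
  induction n using Nat.strong_induction_on with
  | _ n ih =>
    have hlhs : coeff n (X ^ 2 * Q * d⁄dX R w) = 0 := by
      rw [mul_assoc, coeff_X_pow_mul']
      split_ifs with hn
      · rw [coeff_mul]
        refine sum_eq_zero fun p hp => ?_
        rw [HasAntidiagonal.mem_antidiagonal] at hp
        rw [coeff_derivative, ih (p.2 + 1) (by omega), zero_mul, mul_zero]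
      · rfl
    have hrhs : coeff n (w * P) = coeff n w * constantCoeff P := by
      rw [coeff_mul, sum_eq_single (n, 0)]
      · rw [coeff_zero_eq_constantCoeff_apply]
      · rintro ⟨i, j⟩ hp hne
        rw [HasAntidiagonal.mem_antidiagonal] at hp
        rw [ih i (by grind), zero_mul]
      · simp
    rwa [h, hrhs, hP.mul_left_eq_zero] at hlhs

theorem subst_eq_X_of_derivative_eq {H G : R⟦X⟧} (hH : H = X + X ^ 2 * d⁄dX R H)
    (hG0 : constantCoeff G = 0) (hG1 : coeff 1 G = 1) (hG : (X - G) * d⁄dX R G = G ^ 2) :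
    H.subst G = X := by
  have hG' := HasSubst.of_constantCoeff_zero' hG0
  have hu : (H.subst G : R⟦X⟧) = G + G ^ 2 * (d⁄dX R H).subst G := by
    conv_lhs => rw [hH]
    rw [subst_add hG', subst_mul hG', subst_pow hG', subst_X hG']
  have hdu : d⁄dX R (H.subst G) = (d⁄dX R H).subst G * d⁄dX R G := derivative_subst hG'
  refine sub_eq_zero.mp (eq_zero_of_mul_derivative_eq_mul (P := d⁄dX R G)
    (pow_dvd_pow_of_dvd (X_dvd_iff.mpr hG0) 2) ?_ ?_)
  · rw [← coeff_zero_eq_constantCoeff_apply, coeff_derivative, hG1]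
    simp
  · rw [map_sub, derivative_X, hdu, hu]
    linear_combination hG

theorem sum_filter_antidiagonal_eq_coeff_mul {S : Type*} [CommSemiring S] (p q : ℕ → Prop)
    [DecidablePred p] [DecidablePred q] (f g : ℕ → S) (n : ℕ) :
    ∑ x ∈ (HasAntidiagonal.antidiagonal n).filter (fun x => p x.1 ∧ q x.2), f x.1 * g x.2 =
      coeff n (mk (fun i => if p i then f i else 0) * mk (fun j => if q j then g j else 0)) := by
  rw [coeff_mul, sum_filter]
  refine sum_congr rfl fun x _ => ?_
  simp only [coeff_mk, ite_and, ite_mul, mul_ite, zero_mul, mul_zero]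
  split_ifs <;> rfl

section Recurrence

variable {b : ℕ → R}

theorem mk_ite_two_le_natCast_mul (hb1 : b 1 = -1) :
    mk (fun i => if 2 ≤ i then (i : R) * b i else 0) = X * (d⁄dX R (mk b) + 1) := by
  ext n
  rcases n with _ | n
  · simp
  · rw [coeff_succ_X_mul, coeff_mk, map_add, coeff_derivative, coeff_mk, coeff_one]
    rcases n with _ | n <;> simp [hb1, mul_comm]

theorem mk_ite_two_le (hb0 : b 0 = 0) (hb1 : b 1 = -1) :
    mk (fun i => if 2 ≤ i then b i else 0) = mk b + X := by
  ext n
  rcases n with _ | _ | n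
  · simp [hb0]
  · simp [hb1]
  · simp [coeff_X]

theorem mk_ite_one_le (hb0 : b 0 = 0) : mk (fun i => if 1 ≤ i then b i else 0) = mk b := by
  ext n
  rcases n with _ | n
  · simp [hb0]
  · simp

theorem mk_sq_add_mul_derivative_eq_zero (hb0 : b 0 = 0) (hb1 : b 1 = -1)
    (hrec : ∀ n, 2 ≤ n → b n =
      ∑ p ∈ (HasAntidiagonal.antidiagonal (n + 1)).filter (fun p => 2 ≤ p.1 ∧ 2 ≤ p.2),
          (p.1 : R) * b p.1 * b p.2 +
        ∑ p ∈ (HasAntidiagonal.antidiagonal n).filter (fun p => 1 ≤ p.1 ∧ 1 ≤ p.2), b p.1 * b p.2) :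
    mk b ^ 2 + (mk b + X) * d⁄dX R (mk b) = 0 := by
  ext n
  rcases n with _ | _ | n
  · simp [pow_two, hb0]
  · simp [pow_two, coeff_mul, Finset.Nat.antidiagonal_succ, coeff_derivative, hb0, hb1]
  · have hn := hrec (n + 2) (by omega)
    -- in series form the recurrence reads `bₙ = [xⁿ] ((B' + 1)(B + x) + B²)`
    rw [sum_filter_antidiagonal_eq_coeff_mul (2 ≤ ·) (2 ≤ ·) (fun i => (i : R) * b i) b,
      sum_filter_antidiagonal_eq_coeff_mul (1 ≤ ·) (1 ≤ ·) b b, mk_ite_two_le_natCast_mul hb1,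
      mk_ite_two_le hb0 hb1, mk_ite_one_le hb0, mul_assoc, coeff_succ_X_mul] at hn
    have hsplit : coeff (n + 2) ((d⁄dX R (mk b) + 1) * (mk b + X)) =
        coeff (n + 2) ((mk b + X) * d⁄dX R (mk b)) + b (n + 2) := by
      rw [add_mul, one_mul, mul_comm, map_add, map_add _ (mk b), coeff_mk, coeff_X,
        if_neg (by omega), add_zero]
    rw [map_add, pow_two, map_zero]
    linear_combination -hn - hsplit

end Recurrence

end PowerSeries

theorem PS.comp_eq_subst {R : Type*} [CommRing R] {f g : R⟦X⟧} (hg : constantCoeff g = 0) :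
    PS.comp f g = f.subst g := by
  ext n
  rw [PS.comp, coeff_mk, coeff_subst' (HasSubst.of_constantCoeff_zero' hg),
    finsum_eq_sum_of_support_subset _ (s := range (n + 1))]
  · simp only [smul_eq_mul]
  · intro k hk
    rw [Function.mem_support] at hk
    rw [coe_range, Set.mem_Iio, Nat.lt_succ_iff]
    by_contra! h
    exact hk (by rw [coeff_pow_eq_zero_of_lt hg h, smul_zero])

theorem HSeries_eq_X_add_X_sq_mul_derivative : HSeries = X + X ^ 2 * d⁄dX ℚ HSeries := by
  ext n
  rw [map_add, coeff_X, mul_comm, coeff_mul_X_pow']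
  rcases n with _ | _ | n
  · simp [HSeries]
  · simp [HSeries]
  · simp only [HSeries, coeff_derivative, coeff_mk]
    simp [Nat.factorial_succ]
    ring

theorem inverse_of_factorial_series (b : ℕ → ℚ)
    (hb0 : b 0 = 0) (hb1 : b 1 = -1)
    (hrec : ∀ n, 2 ≤ n →
      b n =
        (∑ p ∈ (Finset.HasAntidiagonal.antidiagonal (n + 1)).filter (fun p => 2 ≤ p.1 ∧ 2 ≤ p.2),
            (p.1 : ℚ) * b p.1 * b p.2)
        + ∑ p ∈ (Finset.HasAntidiagonal.antidiagonal n).filter (fun p => 1 ≤ p.1 ∧ 1 ≤ p.2),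
            b p.1 * b p.2)
    (G : PowerSeries ℚ) (hG : G = PowerSeries.mk fun n => -(b n)) :
    PS.comp G HSeries = PowerSeries.X ∧ PS.comp HSeries G = PowerSeries.X := by
  have hGb : G = -mk b := by ext; simp [hG]
  have hG0 : constantCoeff G = 0 := by simp [hG, hb0]
  have hG1 : coeff 1 G = 1 := by simp [hG, hb1]
  have hH0 : constantCoeff HSeries = 0 := by simp [HSeries]
  have hH1 : IsUnit (coeff 1 HSeries) := by simp [HSeries]
  have hGode : (X - G) * d⁄dX ℚ G = G ^ 2 := by
    rw [hGb, map_neg]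
    linear_combination -mk_sq_add_mul_derivative_eq_zero hb0 hb1 hrec
  have hHG : HSeries.subst G = X :=
    subst_eq_X_of_derivative_eq HSeries_eq_X_add_X_sq_mul_derivative hG0 hG1 hGode
  rw [PS.comp_eq_subst hH0, PS.comp_eq_subst hG0]
  exact ⟨subst_eq_X_of_subst_eq_X hH0 hG0 hH1 hHG, hHG⟩
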